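/- Let F be a finitely generated free group. Then the intersection of all terms of the lower central series of F is trivial: ⋂_{m ∈ ℕ} F^(m) = {1}. -/

import Mathlib

open Finsupp List
open scoped commutatorElement

namespace Magnus
variable (n N : ℕ)

abbrev B := {l : List (Fin n) // l.length ≤ N}
abbrev V := B n N →₀ ℚ
abbrev E := Module.End ℚ (V n N)

variable {n N}

/-- shift operator: prepend letter `i`, truncated at length `N`. -/
noncomputable def S (i : Fin n) : E n N :=
  Finsupp.lsum ℚ fun l : B n N =>
    if h : l.val.length < N then Finsupp.lsingle ⟨i :: l.val, by simpa using h⟩ else 0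

lemma S_single (i : Fin n) (l : B n N) (c : ℚ) :
    S i (Finsupp.single l c) =
      if h : l.val.length < N then Finsupp.single ⟨i :: l.val, by simpa using h⟩ c else 0 := by
  rw [S, Finsupp.lsum_single]
  split_ifs with h <;> simp

lemma S_apply_nil (i : Fin n) (v : V n N) (h : ([] : List (Fin n)).length ≤ N) :
    S i v ⟨[], h⟩ = 0 := by
  induction v using Finsupp.induction_linear with
  | zero => simp
  | add f g hf hg => rw [map_add, Finsupp.add_apply, hf, hg]; simp
  | single l c =>
    rw [S_single]
    split_ifs with hl
    · simp [Finsupp.single_apply]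
    · simp

lemma S_apply_cons (i j : Fin n) (t : List (Fin n)) (v : V n N) (h : (j :: t).length ≤ N) :
    S i v ⟨j :: t, h⟩ = if j = i then v ⟨t, by simp at h; omega⟩ else 0 := by
  induction v using Finsupp.induction_linear with
  | zero => simp
  | add f g hf hg =>
    rw [map_add, Finsupp.add_apply, hf, hg]
    split_ifs <;> simp
  | single l c =>
    rw [S_single]
    split_ifs with hl hj hj
    · subst hj
      simp only [Finsupp.single_apply]
      by_cases hlt : l = ⟨t, by simp at h; omega⟩
      · rw [if_pos hlt, if_pos (Subtype.ext (by simp [show l.val = t from Subtype.ext_iff.mp hlt]))]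
      · rw [if_neg, if_neg hlt]
        intro he
        exact hlt (Subtype.ext (List.cons.injEq .. ▸ (Subtype.ext_iff.mp he)).2)
    · simp only [Finsupp.single_apply]
      rw [if_neg]
      intro he
      exact hj ((List.cons.injEq .. ▸ (Subtype.ext_iff.mp he)).1).symm
    · subst hj
      simp only [Finsupp.coe_zero, Pi.zero_apply, Finsupp.single_apply]
      rw [if_neg]
      intro he
      have h2 : l.val = t := Subtype.ext_iff.mp he
      have := congrArg List.length h2
      simp only [List.length_cons] at h
      omega
    · simp

lemma S_pow_apply (i : Fin n) (k : ℕ) (v : V n N) (m : List (Fin n)) (h : m.length ≤ N) :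
    ((S i ^ k) v) ⟨m, h⟩ =
      if m.take k = List.replicate k i then
        v ⟨m.drop k, le_trans (by rw [List.length_drop]; omega) h⟩ else 0 := by
  induction k generalizing v m with
  | zero => simp
  | succ k ih =>
    rw [pow_succ', Module.End.mul_apply]
    cases m with
    | nil =>
      rw [S_apply_nil]
      rw [if_neg]
      simp
    | cons a t =>
      rw [S_apply_cons]
      simp only [List.take_succ_cons, List.replicate_succ, List.drop_succ_cons, List.cons.injEq]
      by_cases ha : a = i
      · rw [if_pos ha, ih]
        by_cases h2 : List.take k t = List.replicate k i
        · rw [if_pos h2, if_pos ⟨ha, h2⟩]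
        · rw [if_neg h2, if_neg (by simp [h2])]
      · rw [if_neg ha, if_neg (by simp [ha])]

lemma S_pow_top (i : Fin n) : (S i : E n N) ^ (N + 1) = 0 := by
  apply LinearMap.ext
  intro v
  apply Finsupp.ext
  rintro ⟨m, hm⟩
  rw [S_pow_apply, if_neg]
  · simp
  · intro hc
    have := congrArg List.length hc
    simp only [List.length_take, List.length_replicate] at this
    omega

/-- geometric-series inverse of `1 + S i` -/
noncomputable def T (i : Fin n) : E n N := ∑ j ∈ Finset.range (N + 1), (-(S i)) ^ j

lemma T_mul (i : Fin n) : (T i : E n N) * (1 + S i) = 1 := by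
  have hg := geom_sum_mul (-(S i) : E n N) (N + 1)
  have hz : (-(S i) : E n N) ^ (N + 1) = 0 := by
    have h := neg_pow (S i : E n N) (N + 1)
    rw [h, S_pow_top, mul_zero]
  rw [hz] at hg
  have h3 := mul_neg (T i : E n N) (1 + S i)
  have h2 : -((T i : E n N) * (1 + S i)) = -1 := by
    rw [← h3, show (-(1 + S i) : E n N) = -S i - 1 by abel, T, hg]
    abel
  exact neg_inj.mp h2

lemma commute_T (i : Fin n) : Commute (1 + S i : E n N) (T i) := by
  apply Commute.sum_right
  intro j _
  exact (Commute.one_left ((-S i : E n N) ^ j)).add_left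
    (((Commute.refl (S i : E n N)).neg_right).pow_right j)

lemma mul_T (i : Fin n) : (1 + S i : E n N) * T i = 1 := by
  rw [commute_T i]; exact T_mul i

/-- the Magnus unit `1 + S i` -/
noncomputable def U (i : Fin n) : (E n N)ˣ := ⟨1 + S i, T i, mul_T i, T_mul i⟩

/-- the Magnus homomorphism -/
noncomputable def rho : FreeGroup (Fin n) →* (E n N)ˣ := FreeGroup.lift fun i => U i

noncomputable def vec (N : ℕ) (w : List (Fin n × Bool)) : V n N :=
  ((rho (N := N) (FreeGroup.mk w) : (E n N)ˣ) : E n N) (Finsupp.single ⟨[], Nat.zero_le N⟩ 1)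

lemma mk_replicate (i : Fin n) (b : Bool) (k : ℕ) :
    FreeGroup.mk (List.replicate k (i, b)) = (FreeGroup.mk [(i, b)]) ^ k := by
  induction k with
  | zero => rw [pow_zero, FreeGroup.one_eq_mk]; rfl
  | succ k ih => rw [List.replicate_succ, pow_succ', ← ih, FreeGroup.mul_mk]; rfl

lemma mk_false (i : Fin n) : FreeGroup.mk [(i, false)] = (FreeGroup.of i)⁻¹ := by
  rw [show FreeGroup.of i = FreeGroup.mk [(i, true)] from rfl, FreeGroup.inv_mk]
  rfl

lemma rho_run (i : Fin n) (b : Bool) (k : ℕ) :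
    ((rho (FreeGroup.mk (List.replicate k (i, b))) : (E n N)ˣ) : E n N)
      = (if b then 1 + S i else T i) ^ k := by
  rw [mk_replicate, map_pow, Units.val_pow_eq_pow_val]
  congr 1
  cases b with
  | true =>
    have : FreeGroup.mk [(i, true)] = FreeGroup.of i := rfl
    rw [this]
    simp only [rho, FreeGroup.lift_apply_of, if_true]
    rfl
  | false =>
    rw [mk_false, map_inv]
    simp only [rho, FreeGroup.lift_apply_of, if_false]
    rfl

noncomputable def dropB (k : ℕ) (m : B n N) : B n N :=
  ⟨m.val.drop k, le_trans (by rw [List.length_drop]; exact Nat.sub_le _ _) m.2⟩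

/-- any nonzero coefficient of `f v` comes from a coefficient of `v` by stripping an `i`-run. -/
def Pro (i : Fin n) (f : E n N) : Prop :=
  ∀ (v : V n N) (m : B n N), f v m ≠ 0 →
    ∃ k, m.val.take k = List.replicate k i ∧ v (dropB k m) ≠ 0

lemma Pro_one (i : Fin n) : Pro i (1 : E n N) := by
  intro v m hm
  exact ⟨0, by simp, by simpa [dropB] using hm⟩

lemma Pro_mul {i : Fin n} {f g : E n N} (hf : Pro i f) (hg : Pro i g) : Pro i (f * g) := by
  intro v m hm
  obtain ⟨k, hk, h2⟩ := hf (g v) m hm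
  obtain ⟨k', hk', h3⟩ := hg v (dropB k m) h2
  refine ⟨k + k', ?_, ?_⟩
  · rw [show (dropB k m).val = m.val.drop k from rfl] at hk'
    rw [List.take_add, hk, hk', List.replicate_add]
  · convert h3 using 2
    simp [dropB, List.drop_drop, Nat.add_comm]

lemma Pro_pow {i : Fin n} {f : E n N} (hf : Pro i f) (k : ℕ) : Pro i (f ^ k) := by
  induction k with
  | zero => simpa using Pro_one i
  | succ k ih => rw [pow_succ]; exact Pro_mul ih hf

lemma Pro_S_pow (i : Fin n) (k : ℕ) : Pro i ((S i : E n N) ^ k) := by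
  intro v m hm
  rw [S_pow_apply] at hm
  split_ifs at hm with h
  · exact ⟨k, h, by simpa [dropB] using hm⟩
  · simp at hm

lemma Pro_one_add_S (i : Fin n) : Pro i (1 + S i : E n N) := by
  intro v m hm
  rw [LinearMap.add_apply, Finsupp.add_apply, Module.End.one_apply] at hm
  by_cases h1 : v m = 0
  · have h2 : (S i v) m ≠ 0 := fun h => hm (by rw [h1, h, add_zero])
    obtain ⟨mv, hmv⟩ := m
    cases mv with
    | nil => exact absurd (S_apply_nil i v hmv) h2
    | cons a t =>
      rw [S_apply_cons] at h2
      split_ifs at h2 with ha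
      · refine ⟨1, by simp [ha], ?_⟩
        simpa [dropB] using h2
      · simp at h2
  · exact ⟨0, by simp, by simpa [dropB] using h1⟩

lemma Pro_T (i : Fin n) : Pro i (T i : E n N) := by
  intro v m hm
  rw [T, LinearMap.sum_apply, Finsupp.finset_sum_apply] at hm
  obtain ⟨j, -, hj⟩ := Finset.exists_ne_zero_of_sum_ne_zero hm
  have hj' : ((S i ^ j) v) m ≠ 0 := by
    rcases Nat.even_or_odd j with he | ho
    · have h := he.neg_pow (S i : E n N)
      rwa [h] at hj
    · have h := ho.neg_pow (S i : E n N)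
      rw [h] at hj
      simpa using hj
  exact Pro_S_pow i j v m hj'

/-- `v` vanishes on words of length `< q`. -/
def Wlow (q : ℕ) (v : V n N) : Prop := ∀ m : B n N, m.val.length < q → v m = 0

/-- `f` raises the filtration degree by at least `p`. -/
def Raises (p : ℕ) (f : E n N) : Prop := ∀ q v, Wlow q v → Wlow (q + p) (f v)

lemma Raises.mono {p p' : ℕ} {f : E n N} (h : Raises p f) (hp : p' ≤ p) : Raises p' f := by
  intro q v hv m hm
  exact h q v hv m (by omega)

lemma Raises.zero : Raises p (0 : E n N) := by intro q v hv m hm; simp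

lemma Raises.one : Raises 0 (1 : E n N) := by
  intro q v hv m hm
  simpa using hv m (by omega)

lemma Raises.add {p : ℕ} {f g : E n N} (hf : Raises p f) (hg : Raises p g) :
    Raises p (f + g) := by
  intro q v hv m hm
  rw [LinearMap.add_apply, Finsupp.add_apply, hf q v hv m hm, hg q v hv m hm, add_zero]

lemma Raises.neg {p : ℕ} {f : E n N} (hf : Raises p f) : Raises p (-f) := by
  intro q v hv m hm
  rw [LinearMap.neg_apply, Finsupp.neg_apply, hf q v hv m hm, neg_zero]

lemma Raises.sub {p : ℕ} {f g : E n N} (hf : Raises p f) (hg : Raises p g) :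
    Raises p (f - g) := by
  rw [sub_eq_add_neg]; exact hf.add hg.neg

lemma Raises.mul {p r : ℕ} {f g : E n N} (hf : Raises p f) (hg : Raises r g) :
    Raises (r + p) (f * g) := by
  intro q v hv m hm
  rw [Module.End.mul_apply]
  exact hf (q + r) (g v) (hg q v hv) m (by omega)

lemma S_raises (i : Fin n) : Raises 1 (S i : E n N) := by
  intro q v hv m hm
  obtain ⟨mv, hmv⟩ := m
  cases mv with
  | nil => exact S_apply_nil i v hmv
  | cons a t =>
    rw [S_apply_cons]
    simp only [List.length_cons] at hm
    split_ifs with ha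
    · exact hv _ (by simp; omega)
    · rfl

lemma S_pow_raises (i : Fin n) (k : ℕ) : Raises k ((S i : E n N) ^ k) := by
  induction k with
  | zero => simpa using Raises.one
  | succ k ih =>
    rw [pow_succ]
    exact (ih.mul (S_raises i)).mono (by omega)

lemma T_sub_one_raises (i : Fin n) : Raises 1 (T i - 1 : E n N) := by
  have hT : (T i : E n N) - 1 = ∑ j ∈ Finset.range N, (-S i : E n N) ^ (j + 1) := by
    rw [T, Finset.sum_range_succ']
    simp
  rw [hT]
  have : ∀ j : ℕ, Raises 1 ((-S i : E n N) ^ (j + 1)) := by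
    intro j
    rcases Nat.even_or_odd (j + 1) with he | ho
    · have h := he.neg_pow (S i : E n N)
      rw [h]
      exact (S_pow_raises i (j + 1)).mono (by omega)
    · have h := ho.neg_pow (S i : E n N)
      rw [h]
      exact ((S_pow_raises i (j + 1)).mono (by omega)).neg
  -- sum of Raises 1
  classical
  induction (Finset.range N) using Finset.induction with
  | empty => simpa using Raises.zero
  | insert _ _ hx ih =>
    rw [Finset.sum_insert hx]
    exact (this _).add ih

lemma one_add_S_sub_one_raises (i : Fin n) : Raises 1 ((1 + S i : E n N) - 1) := by
  have : (1 + S i : E n N) - 1 = S i := by abel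
  rw [this]; exact S_raises i

/-- The filtration subgroups of the unit group. -/
noncomputable def D (p : ℕ) : Subgroup (E n N)ˣ where
  carrier := {u | Raises p ((u : E n N) - 1) ∧ Raises p (((u⁻¹ : (E n N)ˣ) : E n N) - 1)}
  one_mem' := by
    constructor <;> simpa using Raises.zero
  mul_mem' := by
    rintro a b ⟨ha1, ha2⟩ ⟨hb1, hb2⟩
    constructor
    · have key : ((a * b : (E n N)ˣ) : E n N) - 1
          = ((a : E n N) - 1) * ((b : E n N) - 1) + ((a : E n N) - 1) + ((b : E n N) - 1) := by
        rw [Units.val_mul]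
        simp only [mul_sub, sub_mul, mul_one, one_mul]
        abel
      rw [key]
      exact ((ha1.mul hb1).mono (by omega)).add ha1 |>.add hb1
    · have key : (((a * b)⁻¹ : (E n N)ˣ) : E n N) - 1
          = (((b⁻¹ : (E n N)ˣ) : E n N) - 1) * (((a⁻¹ : (E n N)ˣ) : E n N) - 1)
            + (((b⁻¹ : (E n N)ˣ) : E n N) - 1) + (((a⁻¹ : (E n N)ˣ) : E n N) - 1) := by
        rw [mul_inv_rev, Units.val_mul]
        simp only [mul_sub, sub_mul, mul_one, one_mul]
        abel
      rw [key]
      exact ((hb2.mul ha2).mono (by omega)).add hb2 |>.add ha2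
  inv_mem' := by
    rintro a ⟨ha1, ha2⟩
    exact ⟨ha2, by simpa using ha1⟩

lemma mem_D {p : ℕ} {u : (E n N)ˣ} :
    u ∈ (D p : Subgroup (E n N)ˣ) ↔
      Raises p ((u : E n N) - 1) ∧ Raises p (((u⁻¹ : (E n N)ˣ) : E n N) - 1) := Iff.rfl

lemma unit_raises_zero {p : ℕ} {u : (E n N)ˣ} (h : Raises p ((u : E n N) - 1)) :
    Raises 0 (u : E n N) := by
  have : (u : E n N) = ((u : E n N) - 1) + 1 := by abel
  rw [this]
  exact (h.mono (Nat.zero_le p)).add Raises.one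

lemma unit_comm_identity {R : Type*} [Ring R] (a b : Rˣ) :
    ((⁅a, b⁆ : Rˣ) : R) - 1 =
      (((a : R) - 1) * ((b : R) - 1) - ((b : R) - 1) * ((a : R) - 1))
        * ((↑a⁻¹ : R) * (↑b⁻¹ : R)) := by
  have h1 : (((a : R) - 1) * ((b : R) - 1) - ((b : R) - 1) * ((a : R) - 1))
      = (a : R) * b - (b : R) * a := by noncomm_ring
  rw [h1, sub_mul]
  have h2 : (b : R) * (a : R) * ((↑a⁻¹ : R) * (↑b⁻¹ : R)) = 1 := by
    rw [mul_assoc (b : R), ← mul_assoc (a : R), Units.mul_inv, one_mul, Units.mul_inv]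
  have h3 : (a : R) * (b : R) * ((↑a⁻¹ : R) * (↑b⁻¹ : R)) = (a : R) * b * ↑a⁻¹ * ↑b⁻¹ := by
    rw [mul_assoc, mul_assoc, mul_assoc]
  rw [h2, h3, commutatorElement_def]
  simp

lemma commutator_aux {p q : ℕ} {a b : (E n N)ˣ} (ha : a ∈ (D p : Subgroup (E n N)ˣ))
    (hb : b ∈ (D q : Subgroup (E n N)ˣ)) :
    Raises (p + q) (((⁅a, b⁆ : (E n N)ˣ) : E n N) - 1) := by
  obtain ⟨ha1, ha2⟩ := ha
  obtain ⟨hb1, hb2⟩ := hb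
  rw [unit_comm_identity]
  have hmain : Raises (p + q) (((a : E n N) - 1) * ((b : E n N) - 1)
      - ((b : E n N) - 1) * ((a : E n N) - 1)) :=
    ((ha1.mul hb1).mono (by omega)).sub ((hb1.mul ha1).mono (by omega))
  have hinv : Raises 0 (((a⁻¹ : (E n N)ˣ) : E n N) * ((b⁻¹ : (E n N)ˣ) : E n N)) :=
    (unit_raises_zero ha2).mul (unit_raises_zero hb2)
  exact (hmain.mul hinv).mono (by omega)

lemma D_comm {p q : ℕ} {a b : (E n N)ˣ} (ha : a ∈ (D p : Subgroup (E n N)ˣ))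
    (hb : b ∈ (D q : Subgroup (E n N)ˣ)) :
    ⁅a, b⁆ ∈ (D (p + q) : Subgroup (E n N)ˣ) := by
  constructor
  · exact commutator_aux ha hb
  · rw [commutatorElement_inv]
    have := commutator_aux hb ha
    rwa [add_comm q p] at this

lemma U_mem_D1 (i : Fin n) : (U i : (E n N)ˣ) ∈ (D 1 : Subgroup (E n N)ˣ) := by
  constructor
  · exact one_add_S_sub_one_raises i
  · exact T_sub_one_raises i

lemma range_le_D1 : Subgroup.map (rho : FreeGroup (Fin n) →* (E n N)ˣ) ⊤ ≤ D 1 := by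
  rw [← MonoidHom.range_eq_map, rho, FreeGroup.range_lift_eq_closure]
  rw [Subgroup.closure_le]
  rintro x ⟨i, rfl⟩
  exact U_mem_D1 i

lemma lcs_le (k : ℕ) :
    Subgroup.map (rho : FreeGroup (Fin n) →* (E n N)ˣ)
      ((⊤ : Subgroup (FreeGroup (Fin n))).lowerCentralSeries k) ≤ D (k + 1) := by
  induction k with
  | zero =>
    rw [Subgroup.lowerCentralSeries_zero]
    exact range_le_D1
  | succ k ih =>
    have hstep : (⊤ : Subgroup (FreeGroup (Fin n))).lowerCentralSeries (k + 1)
        = ⁅(⊤ : Subgroup (FreeGroup (Fin n))).lowerCentralSeries k, (⊤ : Subgroup (FreeGroup (Fin n)))⁆ := rfl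
    rw [hstep, Subgroup.map_commutator, Subgroup.commutator_le]
    intro x hx y hy
    have h1 : x ∈ (D (k + 1) : Subgroup (E n N)ˣ) := ih hx
    have h2 : y ∈ (D 1 : Subgroup (E n N)ˣ) := range_le_D1 hy
    exact D_comm h1 h2

lemma D_top_eq_one (u : (E n N)ˣ) (hu : u ∈ (D (N + 1) : Subgroup (E n N)ˣ)) : u = 1 := by
  obtain ⟨h1, -⟩ := hu
  apply Units.ext
  apply LinearMap.ext
  intro v
  have hv0 : Wlow 0 v := fun m hm => absurd hm (by omega)
  have := h1 0 v hv0
  have hz : ((u : E n N) - 1) v = 0 := by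
    apply Finsupp.ext
    intro m
    exact this m (by have := m.2; omega)
  have := congrArg (fun w => w + (1 : E n N) v) hz
  simpa [LinearMap.sub_apply] using this

/-- number of maximal runs in a list -/
def runs : List (Fin n) → ℕ
  | [] => 0
  | a :: t => runs t + (if t.head? = some a then 0 else 1)

@[simp] lemma runs_nil : runs ([] : List (Fin n)) = 0 := rfl

lemma runs_cons (a : Fin n) (t : List (Fin n)) :
    runs (a :: t) = runs t + (if t.head? = some a then 0 else 1) := rfl

lemma runs_replicate_append (j : ℕ) (i : Fin n) (t : List (Fin n)) (ht : t.head? ≠ some i) :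
    runs (List.replicate j i ++ t) = runs t + if j = 0 then 0 else 1 := by
  induction j with
  | zero => simp
  | succ j ih =>
    rw [List.replicate_succ, List.cons_append, runs_cons, ih]
    cases j with
    | zero => simp [if_neg ht]
    | succ j =>
      rw [List.replicate_succ]
      simp

lemma runs_replicate_append_le (j : ℕ) (i : Fin n) (t : List (Fin n)) :
    runs (List.replicate j i ++ t) ≤ runs t + 1 := by
  induction j with
  | zero => simp
  | succ j ih =>
    rw [List.replicate_succ, List.cons_append, runs_cons]
    cases j with
    | zero =>
      simp only [List.replicate_zero, List.nil_append] at ih ⊢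
      split_ifs <;> omega
    | succ j =>
      have hh : ((List.replicate (j + 1) i ++ t).head? = some i) := by
        rw [List.replicate_succ, List.cons_append, List.head?_cons]
      rw [if_pos hh]
      omega

abbrev Reduced (w : List (Fin n × Bool)) : Prop :=
  List.Chain' (fun a b => a.1 = b.1 → a.2 = b.2) w

lemma reduced_toWord (g : FreeGroup (Fin n)) : Reduced g.toWord := by
  have hred : FreeGroup.reduce g.toWord = g.toWord := FreeGroup.reduce_toWord g
  -- general: any fixed point of reduce is chain'
  suffices h : ∀ L : List (Fin n × Bool), FreeGroup.reduce L = L → Reduced L by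
    exact h _ hred
  intro L
  induction L with
  | nil => intro _; simp [Reduced, List.Chain']
  | cons a t ih =>
    intro hL
    rw [FreeGroup.reduce.cons] at hL
    cases rt : FreeGroup.reduce t with
    | nil =>
      rw [rt] at hL
      simp only at hL
      injection hL with h1 h2
      rw [← h2]
      simp [Reduced, List.Chain']
    | cons y s =>
      rw [rt] at hL
      simp only at hL
      split_ifs at hL with hc
      · -- hL : s = a :: t, impossible by length
        exfalso
        have hsub : (FreeGroup.reduce t).Sublist t := FreeGroup.Red.sublist (FreeGroup.reduce.red)
        have hlen : (FreeGroup.reduce t).length ≤ t.length := hsub.length_le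
        rw [rt] at hlen
        have := congrArg List.length hL
        simp at this hlen
        omega
      · -- hL : a :: y :: s = a :: t hence t = y :: s
        have ht : y :: s = t := (List.cons.injEq .. ▸ hL).2
        have hredt : Reduced t := ih (by rw [rt, ht])
        rw [← ht]
        rw [← ht] at hredt
        apply List.isChain_cons_cons.mpr
        refine ⟨?_, hredt⟩
        intro h1
        by_contra h2
        exact hc ⟨h1, by cases a.2 <;> cases y.2 <;> simp_all⟩

section Coeff

variable {i : Fin n} {L : List (Fin n)} (hL : L.head? ≠ some i)

include hL in
lemma coeff_S_zero (u : V n N) (hLN : L.length ≤ N) : (S i u) ⟨L, hLN⟩ = 0 := by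
  cases L with
  | nil => exact S_apply_nil i u hLN
  | cons c t =>
    rw [S_apply_cons, if_neg]
    intro hc
    exact hL (by rw [List.head?_cons, hc])

lemma coeff_S_succ (u : V n N) (a : ℕ) (h : (List.replicate (a + 1) i ++ L).length ≤ N) :
    (S i u) ⟨List.replicate (a + 1) i ++ L, h⟩
      = u ⟨List.replicate a i ++ L, by simp at h ⊢; omega⟩ := by
  have he : List.replicate (a + 1) i ++ L = i :: (List.replicate a i ++ L) := by
    rw [List.replicate_succ, List.cons_append]
  have h2 : (i :: (List.replicate a i ++ L)).length ≤ N := he ▸ h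
  rw [show (⟨List.replicate (a + 1) i ++ L, h⟩ : B n N) = ⟨i :: (List.replicate a i ++ L), h2⟩
    from Subtype.ext he]
  rw [S_apply_cons, if_pos rfl]

include hL in
lemma coeff_one_add_S_pow (v : V n N)
    (h0 : ∀ (a : ℕ) (h : (List.replicate a i ++ L).length ≤ N), 1 ≤ a →
      v ⟨List.replicate a i ++ L, h⟩ = 0)
    (hLN : L.length ≤ N)
    (k a : ℕ) (h : (List.replicate a i ++ L).length ≤ N) :
    (((1 + S i : E n N) ^ k) v) ⟨List.replicate a i ++ L, h⟩
      = (k.choose a : ℚ) * v ⟨L, hLN⟩ := by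
  induction k generalizing a with
  | zero =>
    rw [pow_zero, Module.End.one_apply]
    cases a with
    | zero =>
      rw [show (⟨List.replicate 0 i ++ L, h⟩ : B n N) = ⟨L, hLN⟩ from Subtype.ext (by simp)]
      simp
    | succ a =>
      rw [h0 (a + 1) h (by omega)]
      simp
  | succ k ih =>
    rw [pow_succ', Module.End.mul_apply, LinearMap.add_apply, Finsupp.add_apply,
      Module.End.one_apply]
    cases a with
    | zero =>
      rw [show (⟨List.replicate 0 i ++ L, h⟩ : B n N) = ⟨L, hLN⟩ from Subtype.ext (by simp)]
      rw [show ((S i) (((1 + S i : E n N) ^ k) v)) ⟨L, hLN⟩ = 0 from coeff_S_zero hL _ hLN]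
      have := ih 0 (by simpa using hLN)
      rw [show (⟨List.replicate 0 i ++ L, by simpa using hLN⟩ : B n N) = ⟨L, hLN⟩
        from Subtype.ext (by simp)] at this
      rw [this]
      simp
    | succ a =>
      rw [coeff_S_succ, ih (a + 1) h, ih a]
      rw [show ((k + 1).choose (a + 1) : ℚ) = (k.choose (a + 1) : ℚ) + (k.choose a : ℚ) by
        push_cast [Nat.choose_succ_succ']; ring]
      ring

include hL in
lemma coeff_T_pow (v : V n N)
    (h0 : ∀ (a : ℕ) (h : (List.replicate a i ++ L).length ≤ N), 1 ≤ a →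
      v ⟨List.replicate a i ++ L, h⟩ = 0)
    (hLN : L.length ≤ N)
    (k a : ℕ) (h : (List.replicate a i ++ L).length ≤ N) :
    (((T i : E n N) ^ k) v) ⟨List.replicate a i ++ L, h⟩
      = (-1 : ℚ) ^ a * ((k + a - 1).choose a : ℚ) * v ⟨L, hLN⟩ := by
  induction k generalizing a with
  | zero =>
    rw [pow_zero, Module.End.one_apply]
    cases a with
    | zero =>
      rw [show (⟨List.replicate 0 i ++ L, h⟩ : B n N) = ⟨L, hLN⟩ from Subtype.ext (by simp)]
      simp
    | succ a =>
      rw [h0 (a + 1) h (by omega)]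
      have : (0 + (a + 1) - 1).choose (a + 1) = 0 :=
        Nat.choose_eq_zero_of_lt (by omega)
      rw [this]
      simp
  | succ k ih =>
    -- key relation: (1 + S i) * T^(k+1) = T^k
    have hrel : (1 + S i : E n N) * (T i) ^ (k + 1) = (T i) ^ k := by
      rw [pow_succ', ← mul_assoc, mul_T, one_mul]
    induction a with
    | zero =>
      have hz : (((T i : E n N) ^ k) v) ⟨List.replicate 0 i ++ L, h⟩
          = (((T i : E n N) ^ (k + 1)) v) ⟨List.replicate 0 i ++ L, h⟩ := by
        rw [← hrel, Module.End.mul_apply, LinearMap.add_apply, Finsupp.add_apply,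
          Module.End.one_apply]
        rw [show (⟨List.replicate 0 i ++ L, h⟩ : B n N) = ⟨L, hLN⟩ from Subtype.ext (by simp)]
        rw [show ((S i) (((T i : E n N) ^ (k + 1)) v)) ⟨L, hLN⟩ = 0 from coeff_S_zero hL _ hLN]
        simp
      rw [← hz, ih 0 h]
      norm_num
    | succ a iha =>
      have ha' : (List.replicate a i ++ L).length ≤ N := by simp at h ⊢; omega
      -- relation at a+1
      have hrelc : (((T i : E n N) ^ k) v) ⟨List.replicate (a + 1) i ++ L, h⟩
          = (((T i : E n N) ^ (k + 1)) v) ⟨List.replicate (a + 1) i ++ L, h⟩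
            + (((T i : E n N) ^ (k + 1)) v) ⟨List.replicate a i ++ L, ha'⟩ := by
        rw [← hrel, Module.End.mul_apply, LinearMap.add_apply, Finsupp.add_apply,
          Module.End.one_apply, coeff_S_succ]
      have h1 := ih (a + 1) h
      have h2 := iha ha'
      have goal : (((T i : E n N) ^ (k + 1)) v) ⟨List.replicate (a + 1) i ++ L, h⟩
          = (((T i : E n N) ^ k) v) ⟨List.replicate (a + 1) i ++ L, h⟩
            - (((T i : E n N) ^ (k + 1)) v) ⟨List.replicate a i ++ L, ha'⟩ := by
        rw [hrelc]; ring
      rw [goal, h1, h2]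
      have hc1 : (k + (a + 1) - 1).choose (a + 1) = (k + a).choose (a + 1) :=
        congrArg (fun x => Nat.choose x (a + 1)) (by omega)
      have hc2 : (k + 1 + a - 1).choose a = (k + a).choose a :=
        congrArg (fun x => Nat.choose x a) (by omega)
      have hc3 : (k + 1 + (a + 1) - 1).choose (a + 1) = (k + a + 1).choose (a + 1) :=
        congrArg (fun x => Nat.choose x (a + 1)) (by omega)
      rw [hc1, hc2, hc3,
        show ((k + a + 1).choose (a + 1) : ℚ) = ((k + a).choose (a + 1) : ℚ)
          + ((k + a).choose a : ℚ) by push_cast [Nat.choose_succ_succ']; ring]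
      ring

end Coeff

lemma vec_nil : vec (n := n) N [] = Finsupp.single ⟨[], Nat.zero_le N⟩ 1 := by
  rw [vec, ← FreeGroup.one_eq_mk, map_one, Units.val_one, Module.End.one_apply]

lemma main_nil :
    (∀ m : B n N, vec N ([] : List (Fin n × Bool)) m ≠ 0 →
      runs m.val ≤ runs (List.map Prod.fst ([] : List (Fin n × Bool)))) ∧
    ∀ h : (List.map Prod.fst ([] : List (Fin n × Bool))).length ≤ N,
      vec N ([] : List (Fin n × Bool)) ⟨List.map Prod.fst ([] : List (Fin n × Bool)), h⟩ ≠ 0 := by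
  constructor
  · rintro ⟨m, hm⟩ hv
    rw [vec_nil, Finsupp.single_apply] at hv
    split_ifs at hv with hc
    · have : m = [] := (Subtype.ext_iff.mp hc.symm)
      simp [this]
    · simp at hv
  · intro h
    rw [vec_nil,
      show (⟨List.map Prod.fst [], h⟩ : B n N) = ⟨[], Nat.zero_le N⟩ from Subtype.ext (by simp)]
    simp

lemma mainAux (fuel : ℕ) : ∀ (w : List (Fin n × Bool)), w.length ≤ fuel → Reduced w →
    w.length ≤ N →
    (∀ m : B n N, vec N w m ≠ 0 → runs m.val ≤ runs (w.map Prod.fst)) ∧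
    ∀ h : (w.map Prod.fst).length ≤ N, vec N w ⟨w.map Prod.fst, h⟩ ≠ 0 := by
  induction fuel with
  | zero =>
    intro w hf _ _
    have hw0 : w = [] := List.length_eq_zero_iff.mp (by omega)
    subst hw0
    exact main_nil
  | succ fuel ihfuel =>
    intro w hf hred hlen
    cases hw0 : w with
    | nil =>
      subst hw0
      exact main_nil
    | cons hd tl =>
      subst hw0
      set w := hd :: tl with hw
      -- run decomposition
      set p : (Fin n × Bool) → Bool := fun y => y == hd with hp
      set run := w.takeWhile p with hrundef
      set rest := w.dropWhile p with hrestdef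
      set k := run.length with hkdef
      have hw2 : run ++ rest = w := List.takeWhile_append_dropWhile (p := p) (l := w)
      have hrun : run = List.replicate k hd := by
        apply List.eq_replicate_of_mem
        intro b hb
        have := List.mem_takeWhile_imp hb
        rw [hp] at this
        exact eq_of_beq this
      have hk1 : 1 ≤ k := by
        rw [hkdef, hrundef, hw, List.takeWhile_cons_of_pos (by simp [hp])]
        simp
      have hrestlt : rest.length < w.length := by
        have := congrArg List.length hw2
        rw [List.length_append] at this
        omega
      obtain ⟨i, b⟩ := hd
      -- rest does not start with index i
      have dropWhile_head_not : ∀ (l : List (Fin n × Bool)) c, (l.dropWhile p).head? = Option.some c → ¬ p c := by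
        intro l
        induction l with
        | nil => intro c hc; simp at hc
        | cons a t ih =>
          intro c hc
          rw [List.dropWhile_cons] at hc
          split_ifs at hc with hpa
          · exact ih c hc
          · simp only [List.head?_cons, Option.some.injEq] at hc
            subst hc
            simp [hpa]
      have hresthead : ∀ c ∈ rest.head?, c.1 ≠ i := by
        intro c hc hfst
        have hne : ¬ p c := dropWhile_head_not w c (by rw [← hrestdef]; exact Option.mem_def.mp hc)
        -- use chain' to get c.2 = b, contradicting c ≠ (i,b)
        have hsuffix : (((i, b) : Fin n × Bool) :: rest) <:+ w := by
          refine ⟨List.replicate (k - 1) (i, b), ?_⟩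
          rw [← hw2, hrun]
          rw [show k = (k - 1) + 1 by omega, List.replicate_succ']
          simp [List.append_assoc]
        have hchain : List.Chain' (fun a b => a.1 = b.1 → a.2 = b.2) (((i, b) : Fin n × Bool) :: rest) :=
          List.IsChain.suffix hred hsuffix
        have hcrest : rest = c :: rest.tail := by
          cases hrest2 : rest with
          | nil => rw [hrest2] at hc; simp at hc
          | cons c' t =>
            rw [hrest2] at hc
            simp only [List.head?_cons, Option.mem_some_iff] at hc
            rw [hc]
            simp
        rw [hcrest] at hchain
        have hR := (List.isChain_cons_cons.mp hchain).1
        have hc2 : c.2 = b := (hR hfst.symm).symm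
        exact hne (by rw [hp]; simp [show c = (i, b) from Prod.ext hfst hc2])
      have hredrest : Reduced rest :=
        List.IsChain.suffix hred ⟨run, hw2⟩
      have hrestlen : rest.length ≤ N := by omega
      obtain ⟨ihA, ihB⟩ := ihfuel rest (by omega) hredrest hrestlen
      -- heads of mapped list
      have hidxhead : (rest.map Prod.fst).head? ≠ some i := by
        rw [List.head?_map]
        cases hrest2 : rest with
        | nil => simp
        | cons c' t =>
          simp only [List.head?_cons, Option.map_some]
          intro hcc
          exact hresthead c' (by rw [hrest2]; simp) (by simpa using hcc)
      -- vec decomposition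
      have hvec : vec N w = ((if b then 1 + S i else T i) ^ k) (vec N rest) := by
        rw [vec, vec, ← hw2, ← FreeGroup.mul_mk, map_mul, Units.val_mul, Module.End.mul_apply]
        rw [hrun, rho_run]
      -- h0 for coefficient lemmas
      have h0 : ∀ (a : ℕ) (h : (List.replicate a i ++ rest.map Prod.fst).length ≤ N), 1 ≤ a →
          vec N rest ⟨List.replicate a i ++ rest.map Prod.fst, h⟩ = 0 := by
        intro a h ha
        by_contra hne
        have h1 := ihA _ hne
        rw [runs_replicate_append a i _ hidxhead, if_neg (by omega)] at h1
        omega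
      have hidxw : w.map Prod.fst = List.replicate k i ++ rest.map Prod.fst := by
        rw [← hw2, List.map_append, hrun, List.map_replicate]
      have hrunsidx : runs (w.map Prod.fst) = runs (rest.map Prod.fst) + 1 := by
        rw [hidxw, runs_replicate_append k i _ hidxhead, if_neg (by omega)]
      constructor
      · -- part A
        intro m hm
        rw [hvec] at hm
        have hPro : Pro i ((if b then 1 + S i else T i : E n N) ^ k) := by
          cases b
          · simpa using Pro_pow (Pro_T i) k
          · simpa using Pro_pow (Pro_one_add_S i) k
        obtain ⟨j, hj1, hj2⟩ := hPro (vec N rest) m hm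
        have hA := ihA _ hj2
        have hmval : m.val = List.replicate j i ++ m.val.drop j := by
          conv_lhs => rw [← List.take_append_drop j m.val]
          rw [hj1]
        calc runs m.val = runs (List.replicate j i ++ m.val.drop j) := by rw [← hmval]
          _ ≤ runs (m.val.drop j) + 1 := runs_replicate_append_le j i _
          _ ≤ runs (rest.map Prod.fst) + 1 := by
              have : runs ((dropB j m : B n N) : List (Fin n)) ≤ runs (rest.map Prod.fst) := hA
              simp only [dropB] at this
              omega
          _ = runs (w.map Prod.fst) := hrunsidx.symm
      · -- part B
        intro h
        have hlen2 : (List.replicate k i ++ rest.map Prod.fst).length ≤ N := by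
          rw [← hidxw]; exact h
        have hLN : (rest.map Prod.fst).length ≤ N := by
          simp at hlen2 ⊢; omega
        rw [show (⟨w.map Prod.fst, h⟩ : B n N)
          = ⟨List.replicate k i ++ rest.map Prod.fst, hlen2⟩ from Subtype.ext hidxw]
        rw [hvec]
        cases b
        · -- b = false : T
          simp only [Bool.false_eq_true, if_false]
          rw [coeff_T_pow hidxhead (vec N rest) h0 hLN k k hlen2]
          apply mul_ne_zero
          apply mul_ne_zero
          · exact pow_ne_zero _ (by norm_num)
          · have : 0 < (k + k - 1).choose k := Nat.choose_pos (by omega)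
            exact_mod_cast this.ne'
          · exact ihB hLN
        · -- b = true
          simp only [if_true]
          rw [coeff_one_add_S_pow hidxhead (vec N rest) h0 hLN k k hlen2]
          rw [Nat.choose_self]
          simpa using ihB hLN

lemma main (w : List (Fin n × Bool)) (hred : Reduced w) (hlen : w.length ≤ N) :
    (∀ m : B n N, vec N w m ≠ 0 → runs m.val ≤ runs (w.map Prod.fst)) ∧
    ∀ h : (w.map Prod.fst).length ≤ N, vec N w ⟨w.map Prod.fst, h⟩ ≠ 0 :=
  mainAux w.length w le_rfl hred hlen

end Magnus

/-- Paper-indexed lower central series: `G^(1) = G`, `G^(m+1) = [G^(m), G]`. -/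
def paperLCS (G : Type*) [Group G] (m : ℕ) : Subgroup G := Subgroup.lowerCentralSeries (⊤ : Subgroup G) (m - 1)

/-- A finitely generated free group is residually nilpotent:
the intersection of all terms of its lower central series is trivial. -/
theorem freeGroup_inf_lcs_eq_bot (n : ℕ) :
    (⨅ m : ℕ, paperLCS (FreeGroup (Fin n)) m) = ⊥ := by
  rw [eq_bot_iff]
  intro g hg
  rw [Subgroup.mem_bot]
  by_contra hne
  set w := g.toWord with hwdef
  have hwne : w ≠ [] := fun h => hne (FreeGroup.toWord_eq_nil_iff.mp h)
  set N := w.length with hN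
  have hNpos : 0 < N := List.length_pos_iff.mpr hwne
  have hgN : g ∈ (⊤ : Subgroup (FreeGroup (Fin n))).lowerCentralSeries N := by
    have := Subgroup.mem_iInf.mp hg (N + 1)
    simpa [paperLCS] using this
  have hmem : Magnus.rho (n := n) (N := N) g ∈ Magnus.D (N + 1) :=
    Magnus.lcs_le N (Subgroup.mem_map.mpr ⟨g, hgN, rfl⟩)
  have hone : Magnus.rho (n := n) (N := N) g = 1 := Magnus.D_top_eq_one _ hmem
  have hred := Magnus.reduced_toWord g
  obtain ⟨-, hB⟩ := Magnus.main (N := N) w hred le_rfl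
  have hcoeff := hB (by simp [N])
  apply hcoeff
  have hvec : Magnus.vec (n := n) N w = Finsupp.single ⟨[], Nat.zero_le N⟩ 1 := by
    rw [Magnus.vec, show FreeGroup.mk w = g from FreeGroup.mk_toWord, hone, Units.val_one,
      Module.End.one_apply]
  rw [hvec, Finsupp.single_apply, if_neg]
  intro hc
  have : ([] : List (Fin n)) = w.map Prod.fst := Subtype.ext_iff.mp hc
  have := congrArg List.length this
  simp at this
  omega
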